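/- arXiv:2206.01516 — 2 statements merged into one kernel-verified Lean document; each statement's English description precedes it below -/
import Mathlib

section
/- Let (X,d) be a complete pseudometric space and A ⊆ X. Then A is a complete subset of X if and only if for every point x in the topological boundary of A, the intersection [x]_0 ∩ A is nonempty. -/
def IsCompleteSubset {X : Type*} [PseudoMetricSpace X] (A : Set X) : Prop :=
  ∀ u : ℕ → X, (∀ n, u n ∈ A) → CauchySeq u →
    ∃ a ∈ A, Filter.Tendsto u Filter.atTop (nhds a)

/-! Zero-distance classes are the inseparability classes of the pseudometric topology, and
`closure A = A ∪ frontier A`, so the condition says that every point of `closure A` is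
inseparable from a point of `A`. A Cauchy sequence in `A` converges in `X` to a point of
`closure A`, hence also to every point inseparable from it; conversely every point of
`closure A` is the limit of a sequence in `A`, which is Cauchy, and its limits in `A` are
inseparable from that point. -/

theorem forall_frontier_exists_inseparable_iff_forall_closure {X : Type*} [TopologicalSpace X]
    {A : Set X} :
    (∀ x ∈ frontier A, ∃ a ∈ A, Inseparable x a) ↔
      ∀ x ∈ closure A, ∃ a ∈ A, Inseparable x a := by
  rw [closure_eq_self_union_frontier]
  simp only [Set.mem_union, or_imp, forall_and]
  exact (and_iff_right fun x hx => ⟨x, hx, .rfl⟩).symm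

section

variable {X : Type*} [PseudoMetricSpace X] {A : Set X}

theorem IsCompleteSubset.exists_inseparable_mem_of_mem_closure (hA : IsCompleteSubset A)
    {x : X} (hx : x ∈ closure A) : ∃ a ∈ A, Inseparable x a := by
  obtain ⟨u, hu, hux⟩ := mem_closure_iff_seq_limit.mp hx
  obtain ⟨a, haA, hua⟩ := hA u hu hux.cauchySeq
  exact ⟨a, haA, tendsto_nhds_unique_inseparable hux hua⟩

theorem isCompleteSubset_of_forall_closure_exists_inseparable [CompleteSpace X]
    (h : ∀ x ∈ closure A, ∃ a ∈ A, Inseparable x a) : IsCompleteSubset A := by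
  intro u hu hu_cauchy
  obtain ⟨x, hux⟩ := cauchySeq_tendsto_of_complete hu_cauchy
  obtain ⟨a, haA, hxa⟩ := h x (mem_closure_of_tendsto hux (.of_forall hu))
  exact ⟨a, haA, hxa.nhds_eq ▸ hux⟩

theorem isCompleteSubset_iff_forall_closure_exists_inseparable [CompleteSpace X] :
    IsCompleteSubset A ↔ ∀ x ∈ closure A, ∃ a ∈ A, Inseparable x a :=
  ⟨fun hA _ hx => hA.exists_inseparable_mem_of_mem_closure hx,
    isCompleteSubset_of_forall_closure_exists_inseparable⟩

end

/-- In a complete pseudometric space, `A` is complete iff every boundary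
point of `A` has zero-distance class meeting `A`. -/
theorem complete_iff_frontier_classes_meet {X : Type*} [PseudoMetricSpace X]
    [CompleteSpace X] (A : Set X) :
    IsCompleteSubset A ↔
      ∀ x ∈ frontier A, ({z : X | dist x z = 0} ∩ A).Nonempty := by
  rw [isCompleteSubset_iff_forall_closure_exists_inseparable,
    ← forall_frontier_exists_inseparable_iff_forall_closure]
  refine forall₂_congr fun x _ => ?_
  simp only [Set.Nonempty, Set.mem_inter_iff, Set.mem_ofPred_eq, Metric.inseparable_iff]
  exact exists_congr fun _ => and_comm
end

section
/- A nonempty pseudometric space (Y,ρ) is complete if and only if Y is a closed subset of every pseudometric superspace (X,d) of (Y,ρ) satisfying d(x,y) > 0 for all y ∈ Y and x ∈ X∖Y. -/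
open Filter Topology

noncomputable def limDist {Y : Type*} [PseudoMetricSpace Y] (u : ℕ → Y) (y : Y) : ℝ :=
  limUnder atTop (fun n => dist y (u n))

lemma cauchy_distSeq {Y : Type*} [PseudoMetricSpace Y] {u : ℕ → Y} (hu : CauchySeq u) (y : Y) :
    CauchySeq (fun n => dist y (u n)) :=
  (LipschitzWith.dist_right y).uniformContinuous.comp_cauchySeq hu

lemma tendsto_limDist {Y : Type*} [PseudoMetricSpace Y] {u : ℕ → Y} (hu : CauchySeq u) (y : Y) :
    Tendsto (fun n => dist y (u n)) atTop (𝓝 (limDist u y)) :=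
  (cauchy_distSeq hu y).tendsto_limUnder

lemma limDist_nonneg {Y : Type*} [PseudoMetricSpace Y] {u : ℕ → Y} (hu : CauchySeq u) (y : Y) :
    0 ≤ limDist u y :=
  ge_of_tendsto' (tendsto_limDist hu y) (fun _ => dist_nonneg)

lemma limDist_le {Y : Type*} [PseudoMetricSpace Y] {u : ℕ → Y} (hu : CauchySeq u) (a b : Y) :
    limDist u a ≤ dist a b + limDist u b :=
  le_of_tendsto_of_tendsto' (tendsto_limDist hu a)
    (tendsto_const_nhds.add (tendsto_limDist hu b))
    (fun n => dist_triangle a b (u n))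

lemma dist_le_limDist_add {Y : Type*} [PseudoMetricSpace Y] {u : ℕ → Y} (hu : CauchySeq u)
    (a c : Y) : dist a c ≤ limDist u a + limDist u c :=
  le_of_tendsto_of_tendsto' (tendsto_const_nhds : Tendsto (fun _ : ℕ => dist a c) atTop _)
    ((tendsto_limDist hu a).add (tendsto_limDist hu c))
    (fun n => by
      calc dist a c ≤ dist a (u n) + dist (u n) c := dist_triangle a (u n) c
        _ = dist a (u n) + dist c (u n) := by rw [dist_comm (u n) c])

noncomputable def cecSpace {Y : Type*} [PseudoMetricSpace Y] {u : ℕ → Y} (hu : CauchySeq u) :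
    PseudoMetricSpace (Option Y) where
  dist x z := match x, z with
    | some a, some b => dist a b
    | some a, none => limDist u a
    | none, some b => limDist u b
    | none, none => 0
  dist_self := by rintro (_ | a) <;> simp
  dist_comm := by rintro (_ | a) (_ | b) <;> simp [dist_comm]
  dist_triangle := by
    rintro (_ | a) (_ | b) (_ | c)
    · show (0 : ℝ) ≤ 0 + 0; norm_num
    · show limDist u c ≤ 0 + limDist u c; norm_num
    · show (0 : ℝ) ≤ limDist u b + limDist u b
      exact add_nonneg (limDist_nonneg hu b) (limDist_nonneg hu b)
    · show limDist u c ≤ limDist u b + dist b c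
      calc limDist u c ≤ dist c b + limDist u b := limDist_le hu c b
        _ = limDist u b + dist b c := by rw [dist_comm]; ring
    · show limDist u a ≤ limDist u a + 0; norm_num
    · show dist a c ≤ limDist u a + limDist u c
      exact dist_le_limDist_add hu a c
    · show limDist u a ≤ dist a b + limDist u b
      exact limDist_le hu a b
    · exact dist_triangle a b c

lemma cecSpace_dist_some_some {Y : Type*} [PseudoMetricSpace Y] {u : ℕ → Y} (hu : CauchySeq u)
    (a b : Y) : @dist _ (cecSpace hu).toDist (some a) (some b) = dist a b := rfl

lemma cecSpace_dist_some_none {Y : Type*} [PseudoMetricSpace Y] {u : ℕ → Y} (hu : CauchySeq u)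
    (a : Y) : @dist _ (cecSpace hu).toDist (some a) none = limDist u a := rfl

lemma cecSpace_dist_none_some {Y : Type*} [PseudoMetricSpace Y] {u : ℕ → Y} (hu : CauchySeq u)
    (a : Y) : @dist _ (cecSpace hu).toDist none (some a) = limDist u a := rfl

/-- A nonempty pseudometric space `(Y, ρ)` is complete iff `Y` is closed in
every pseudometric superspace `(X, d)` of `(Y, ρ)` (here: every pseudometric
space `X` with a distance-preserving embedding `ι : Y → X`) satisfying
`d(x, y) > 0` for all `y ∈ Y` and `x ∈ X ∖ Y`. -/
theorem complete_iff_closed_in_CEC {Y : Type u} [PseudoMetricSpace Y]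
    [Nonempty Y] :
    CompleteSpace Y ↔
      ∀ (X : Type u) [PseudoMetricSpace X] (ι : Y → X),
        (∀ y₁ y₂ : Y, dist (ι y₁) (ι y₂) = dist y₁ y₂) →
        (∀ x : X, x ∉ Set.range ι → ∀ y : Y, dist x (ι y) > 0) →
        IsClosed (Set.range ι) := by
  constructor
  · intro hY X _ ι hiso hpos
    apply IsSeqClosed.isClosed
    intro p x hp hx
    choose y hy using hp
    have hcy : CauchySeq y := by
      rw [Metric.cauchySeq_iff]
      have hcp := Metric.cauchySeq_iff.1 hx.cauchySeq
      intro ε hε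
      obtain ⟨N, hN⟩ := hcp ε hε
      refine ⟨N, fun m hm n hn => ?_⟩
      have := hN m hm n hn
      rwa [← hy m, ← hy n, hiso] at this
    obtain ⟨a, ha⟩ := cauchySeq_tendsto_of_complete hcy
    have hpa : Tendsto (fun n => dist (p n) (ι a)) atTop (𝓝 0) := by
      have heq : ∀ n, dist (p n) (ι a) = dist (y n) a := fun n => by rw [← hy n, hiso]
      simp only [heq]
      exact (tendsto_iff_dist_tendsto_zero).1 ha
    have hxa : Tendsto (fun n => dist x (p n)) atTop (𝓝 0) := by
      have := (tendsto_iff_dist_tendsto_zero).1 hx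
      exact this.congr (fun n => dist_comm (p n) x)
    by_contra hxr
    have hd : dist x (ι a) > 0 := hpos x hxr a
    have hle : dist x (ι a) ≤ 0 := by
      refine le_of_tendsto_of_tendsto'
        (tendsto_const_nhds : Tendsto (fun _ : ℕ => dist x (ι a)) atTop _) ?_
        (fun n => dist_triangle x (p n) (ι a))
      simpa using hxa.add hpa
    linarith
  · intro h
    apply Metric.complete_of_cauchySeq_tendsto
    intro u hu
    by_contra hno
    letI := cecSpace hu
    have hclosed := h (Option Y) some
      (fun y₁ y₂ => cecSpace_dist_some_some hu y₁ y₂)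
      (fun x hx yy => by
        have hxn : x = none := by
          cases x with
          | none => rfl
          | some a => exact absurd ⟨a, rfl⟩ hx
        subst hxn
        rw [cecSpace_dist_none_some hu]
        rcases lt_or_eq_of_le (limDist_nonneg hu yy) with h' | h'
        · exact h'
        · exfalso
          apply hno
          refine ⟨yy, ?_⟩
          rw [tendsto_iff_dist_tendsto_zero]
          have hz : Tendsto (fun n => dist yy (u n)) atTop (𝓝 0) := by
            rw [h']; exact tendsto_limDist hu yy
          exact hz.congr (fun n => dist_comm yy (u n)))
    have htend : Tendsto (fun n => (some (u n) : Option Y)) atTop (𝓝 none) := by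
      rw [tendsto_iff_dist_tendsto_zero]
      simp only [cecSpace_dist_some_none hu]
      rw [Metric.tendsto_atTop]
      intro ε hε
      obtain ⟨N, hN⟩ := Metric.cauchySeq_iff.1 hu (ε / 2) (by linarith)
      refine ⟨N, fun n hn => ?_⟩
      have hle : limDist u (u n) ≤ ε / 2 := by
        refine le_of_tendsto (tendsto_limDist hu (u n)) ?_
        filter_upwards [eventually_ge_atTop N] with m hm
        exact (hN n hn m hm).le
      have h0 : 0 ≤ limDist u (u n) := limDist_nonneg hu (u n)
      rw [Real.dist_eq, sub_zero, abs_of_nonneg h0]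
      linarith
    have hmem : (none : Option Y) ∈ Set.range (some : Y → Option Y) :=
      hclosed.closure_subset (mem_closure_of_tendsto htend
        (Eventually.of_forall fun n => ⟨u n, rfl⟩))
    obtain ⟨yy, hyy⟩ := hmem
    exact Option.some_ne_none yy hyy
end
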